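/- For every integer m ≥ 2 and every real number x with 1/m² ≤ x ≤ (m−1)/m, setting α̃ = 1 − 2m(1 − √x) + 2√(m(m−1))·(1 − √x) and f(y) = (1 − √y)², it holds that ((m−1)/m)·( f((m·x − α̃)/(m−1)) + 1/√(m−1) ) ≤ f(x) + 1/√m. -/

import Mathlib

/-!
With `s = √x`, `u = √m` and `v = √(m - 1)`, the adversary bid is chosen so that
`m x - α̃ = (v - u (1 - s))²` is a perfect square, and `x ≥ 1/m²` makes its base nonnegative.
Hence `f((m x - α̃)/(m - 1)) = (u (1 - s) / v)²`, which the factor `(m - 1)/m` turns back into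
`f(x) = (1 - s)²`; the remaining term is `√(m - 1)/m ≤ 1/√m`.
-/

open Real

noncomputable def alphaTilde (M x : ℝ) : ℝ :=
  1 - 2 * M * (1 - √x) + 2 * √(M * (M - 1)) * (1 - √x)

lemma mul_sub_alphaTilde {M x : ℝ} (hM : 1 ≤ M) (hx : 0 ≤ x) :
    M * x - alphaTilde M x = (√(M - 1) - √M * (1 - √x)) ^ 2 := by
  rw [alphaTilde, sqrt_mul (by linarith)]
  linear_combination (-M) * sq_sqrt hx - (1 - √x) ^ 2 * sq_sqrt (by linarith : 0 ≤ M)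
    - sq_sqrt (by linarith : 0 ≤ M - 1)

lemma sqrt_mul_one_sub_sqrt_le {M x : ℝ} (hM : 1 ≤ M) (hx : 1 / M ^ 2 ≤ x) :
    √M * (1 - √x) ≤ √(M - 1) := by
  have hM0 : 0 < M := by linarith
  have h_sqrt_x : 1 / M ≤ √x := by
    rw [← sqrt_sq (by positivity : 0 ≤ 1 / M), div_pow, one_pow]
    exact sqrt_le_sqrt hx
  -- `(1 - 1/M)² ≤ 1 - 1/M`, i.e. `M (1 - 1/M)² ≤ M - 1`
  calc √M * (1 - √x) ≤ √M * (1 - 1 / M) := by gcongr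
    _ ≤ |√M * (1 - 1 / M)| := le_abs_self _
    _ ≤ √(M - 1) := by
      apply abs_le_sqrt
      rw [mul_pow, sq_sqrt hM0.le]
      field_simp
      nlinarith

lemma sqrt_sub_alphaTilde_div {M x : ℝ} (hM : 1 < M) (hx : 1 / M ^ 2 ≤ x) :
    √((M * x - alphaTilde M x) / (M - 1)) = 1 - √M * (1 - √x) / √(M - 1) := by
  have hv : 0 < √(M - 1) := sqrt_pos.2 (by linarith)
  have hx0 : 0 ≤ x := le_trans (by positivity) hx
  have h_sq : (√(M - 1) - √M * (1 - √x)) ^ 2 / (M - 1)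
      = ((√(M - 1) - √M * (1 - √x)) / √(M - 1)) ^ 2 := by
    rw [div_pow, sq_sqrt (by linarith)]
  rw [mul_sub_alphaTilde hM.le hx0, h_sq,
    sqrt_sq (div_nonneg (sub_nonneg.2 (sqrt_mul_one_sub_sqrt_le hM.le hx)) hv.le), sub_div,
    div_self hv.ne']

lemma sqrt_sub_one_div_le_one_div_sqrt {M : ℝ} (hM : 0 ≤ M) : √(M - 1) / M ≤ 1 / √M := by
  rw [← sqrt_div_self']
  gcongr
  linarith

theorem h_bound_general (m : ℕ) (hm : 2 ≤ m) (x : ℝ)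
    (hx1 : 1 / (m : ℝ) ^ 2 ≤ x) :
    (((m : ℝ) - 1) / m)
        * ((1 - Real.sqrt (((m : ℝ) * x
              - (1 - 2 * (m : ℝ) * (1 - Real.sqrt x)
                  + 2 * Real.sqrt ((m : ℝ) * ((m : ℝ) - 1)) * (1 - Real.sqrt x)))
              / ((m : ℝ) - 1))) ^ 2
            + 1 / Real.sqrt ((m : ℝ) - 1))
      ≤ (1 - Real.sqrt x) ^ 2 + 1 / Real.sqrt m := by
  have hM : (1 : ℝ) < m := by exact_mod_cast hm
  have hv : 0 < √((m : ℝ) - 1) := sqrt_pos.2 (by linarith)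
  change _ * ((1 - √((m * x - alphaTilde m x) / (m - 1))) ^ 2 + _) ≤ _
  rw [sqrt_sub_alphaTilde_div hM hx1]
  calc ((m : ℝ) - 1) / m * ((1 - (1 - √m * (1 - √x) / √(m - 1))) ^ 2 + 1 / √(m - 1))
      = (1 - √x) ^ 2 + √(m - 1) / m := by
        rw [sub_sub_cancel, div_pow, mul_pow, sq_sqrt (by linarith)]
        field_simp
        linear_combination -sq_sqrt (by linarith : (0 : ℝ) ≤ m - 1)
    _ ≤ (1 - √x) ^ 2 + 1 / √m := by
        gcongr (1 - √x) ^ 2 + ?_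
        exact sqrt_sub_one_div_le_one_div_sqrt (by linarith)

/-- Claim 4: h_m(x, α̃) ≤ f(x) + 1/√m, with the induction hypothesis bound plugged in. -/
theorem h_bound (m : ℕ) (hm : 2 ≤ m) (x : ℝ)
    (hx1 : 1 / (m : ℝ) ^ 2 ≤ x) (hx2 : x ≤ ((m : ℝ) - 1) / m) :
    (((m : ℝ) - 1) / m)
        * ((1 - Real.sqrt (((m : ℝ) * x
              - (1 - 2 * (m : ℝ) * (1 - Real.sqrt x)
                  + 2 * Real.sqrt ((m : ℝ) * ((m : ℝ) - 1)) * (1 - Real.sqrt x)))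
              / ((m : ℝ) - 1))) ^ 2
            + 1 / Real.sqrt ((m : ℝ) - 1))
      ≤ (1 - Real.sqrt x) ^ 2 + 1 / Real.sqrt m :=
  h_bound_general m hm x hx1
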